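/- For all positive integers n, ∑ b_{j_1} b_{j_2} b_{j_3}, where the sum ranges over all triples (j_1, j_2, j_3) of nonnegative integers with j_1 + j_2 + j_3 = n, equals (1/2)(n-1)(n-2) b_n + (1/2)(n-2)(2n-5) b_{n-1} + (1/2)(n-3)^2 b_{n-2}, where by convention b_m = 0 for m < 0. -/

import Mathlib

/-- Bernoulli numbers of the second kind: `b 0 = 1` and for `n ≥ 1`,
`b n = -∑_{k=1}^{n} (-1)^k b_{n-k}/(k+1)`. -/
def bernoulliSnd : ℕ → ℚ
  | 0 => 1
  | n + 1 =>
      -∑ k ∈ Finset.range (n + 1),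
        (-1 : ℚ) ^ (k + 1) * bernoulliSnd (n - k) / (k + 2)
  decreasing_by exact Nat.lt_succ_of_le (Nat.sub_le n k)

/-- Extension of the Bernoulli numbers of the second kind to integer indices,
with `b m = 0` for `m < 0`. -/
def bernoulliSndInt (m : ℤ) : ℚ :=
  if m < 0 then 0 else bernoulliSnd m.toNat

/-!
Let `B = ∑ bₙ Xⁿ = X / log(1 + X)` and `L = log(1 + X) / X = ∑ (-1)ᵏ Xᵏ / (k + 1)`; the recursion
defining `bₙ` says `B L = 1`. As `(X L)' = 1 / (1 + X)`, differentiating `B L = 1` gives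
`B² = (1 + X)(B - X B')`. The Euler operator `θ = X d/dX` multiplies the `n`-th coefficient by `n`,
and applying it to this equation expresses `B θB`, hence `B³ = B · B²`, as a combination of
`Xᵏ θʲ B` with polynomial coefficients, whose `n`-th coefficient is read off directly.
-/

open PowerSeries Finset

theorem PowerSeries.coeff_prod_univ_fin {R : Type*} [CommSemiring R] (k n : ℕ)
    (f : Fin k → R⟦X⟧) :
    coeff n (∏ i, f i) = ∑ j ∈ Nat.antidiagonalTuple k n, ∏ i, coeff (j i) (f i) := by
  rw [coeff_prod]
  exact sum_equiv Finsupp.equivFunOnFinite (by simp [Nat.mem_antidiagonalTuple]) (by simp)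

theorem PowerSeries.coeff_X_mul_derivative {R : Type*} [CommSemiring R] (f : R⟦X⟧) (n : ℕ) :
    coeff n (X * d⁄dX R f) = n * coeff n f := by
  cases n with
  | zero => simp
  | succ n => rw [coeff_succ_X_mul, coeff_derivative, mul_comm]; push_cast; rfl

theorem bernoulliSndInt_natCast (n : ℕ) : bernoulliSndInt n = bernoulliSnd n := by
  simp [bernoulliSndInt]

noncomputable def bernoulliSndSeries : ℚ⟦X⟧ := mk bernoulliSnd

noncomputable def logOneAddDivX : ℚ⟦X⟧ := mk fun k => (-1) ^ k / (k + 1)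

noncomputable def bernoulliSndWeighted (c : ℚ → ℚ) : ℚ⟦X⟧ := mk fun n => c n * bernoulliSnd n

@[simp]
theorem coeff_bernoulliSndSeries (n : ℕ) : coeff n bernoulliSndSeries = bernoulliSnd n :=
  coeff_mk _ _

@[simp]
theorem coeff_bernoulliSndWeighted (c : ℚ → ℚ) (n : ℕ) :
    coeff n (bernoulliSndWeighted c) = c n * bernoulliSnd n :=
  coeff_mk _ _

theorem coeff_X_pow_mul_bernoulliSndWeighted (c : ℚ → ℚ) (k n : ℕ) :
    coeff n (X ^ k * bernoulliSndWeighted c) = c (n - k) * bernoulliSndInt (n - k) := by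
  rw [coeff_X_pow_mul']
  split_ifs with hkn
  · rw [coeff_bernoulliSndWeighted, ← bernoulliSndInt_natCast]
    push_cast [hkn]
    rfl
  · simp [bernoulliSndInt, show (n : ℤ) - k < 0 by omega]

theorem X_mul_derivative_bernoulliSndSeries :
    X * d⁄dX ℚ bernoulliSndSeries = bernoulliSndWeighted fun x => x := by
  ext n
  simp [coeff_X_mul_derivative]

theorem X_mul_derivative_bernoulliSndWeighted (c : ℚ → ℚ) :
    X * d⁄dX ℚ (bernoulliSndWeighted c) = bernoulliSndWeighted fun x => x * c x := by
  ext n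
  simp [coeff_X_mul_derivative, mul_assoc]

theorem coeff_bernoulliSndSeries_pow_three (n : ℕ) :
    coeff n (bernoulliSndSeries ^ 3) = ∑ j ∈ Nat.antidiagonalTuple 3 n,
        bernoulliSnd (j 0) * bernoulliSnd (j 1) * bernoulliSnd (j 2) := by
  rw [← Fin.prod_const, coeff_prod_univ_fin]
  simp [Fin.prod_univ_three]

theorem bernoulliSndSeries_mul_logOneAddDivX : bernoulliSndSeries * logOneAddDivX = 1 := by
  ext (_ | n)
  · simp [bernoulliSndSeries, logOneAddDivX, bernoulliSnd]
  rw [coeff_mul, Nat.sum_antidiagonal_succ', ← Nat.sum_antidiagonal_swap]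
  simp only [Prod.swap]
  rw [Nat.sum_antidiagonal_eq_sum_range_succ (fun i j => coeff j _ * coeff (i + 1) _)]
  simp only [coeff_bernoulliSndSeries, logOneAddDivX, coeff_mk, coeff_one]
  rw [bernoulliSnd, if_neg n.succ_ne_zero]
  simp only [pow_zero, Nat.cast_zero, zero_add, div_one, mul_one, neg_add_eq_zero]
  refine sum_congr rfl fun k _ => ?_
  push_cast
  ring

theorem one_add_X_mul_logOneAddDivX_add_X_mul_derivative :
    (1 + X) * (logOneAddDivX + X * d⁄dX ℚ logOneAddDivX) = 1 := by
  have h (k : ℕ) : coeff k (logOneAddDivX + X * d⁄dX ℚ logOneAddDivX) = (-1) ^ k := by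
    rw [map_add, coeff_X_mul_derivative, logOneAddDivX, coeff_mk]
    field_simp
    ring
  ext (_ | n)
  · simpa using h 0
  · rw [add_mul, one_mul, map_add, coeff_succ_X_mul, h, h, coeff_one]
    simp [pow_succ]

theorem bernoulliSndSeries_sq :
    bernoulliSndSeries ^ 2 = (1 + X) * bernoulliSndWeighted fun x => 1 - x := by
  have hBL := bernoulliSndSeries_mul_logOneAddDivX
  have hL : logOneAddDivX ≠ 0 := right_ne_zero_of_mul_eq_one hBL
  have hderiv : d⁄dX ℚ bernoulliSndSeries * logOneAddDivX +
      bernoulliSndSeries * d⁄dX ℚ logOneAddDivX = 0 := by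
    linear_combination (by simpa using congrArg (d⁄dX ℚ) hBL :
      bernoulliSndSeries * d⁄dX ℚ logOneAddDivX + logOneAddDivX * d⁄dX ℚ bernoulliSndSeries = 0)
  have hD : bernoulliSndSeries - X * d⁄dX ℚ bernoulliSndSeries =
      bernoulliSndWeighted fun x => 1 - x := by
    ext n
    simp [coeff_X_mul_derivative, sub_mul]
  rw [← hD]
  apply mul_right_cancel₀ (pow_ne_zero 2 hL)
  linear_combination (bernoulliSndSeries * logOneAddDivX) * hBL
    + (X * (1 + X) * logOneAddDivX) * hderiv
    - (bernoulliSndSeries * logOneAddDivX) * one_add_X_mul_logOneAddDivX_add_X_mul_derivative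

theorem two_mul_bernoulliSndSeries_pow_three :
    2 * bernoulliSndSeries ^ 3 =
      bernoulliSndWeighted (fun x => (x - 1) * (x - 2))
        + X * bernoulliSndWeighted (fun x => (x - 1) * (2 * x - 3))
        + X ^ 2 * bernoulliSndWeighted (fun x => (x - 1) ^ 2) := by
  have hsq := bernoulliSndSeries_sq
  set D := bernoulliSndWeighted fun x => 1 - x
  set θD := bernoulliSndWeighted fun x => x * (1 - x) with hθD
  have hθ : 2 * bernoulliSndSeries * bernoulliSndWeighted (fun x => x) =
      X * D + (1 + X) * θD := by
    have := congrArg (X * d⁄dX ℚ ·) hsq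
    simp only [derivative_pow, Derivation.leibniz, map_add, derivative_X,
      Derivation.map_one_eq_zero, smul_eq_mul] at this
    norm_num at this
    rw [← X_mul_derivative_bernoulliSndSeries, hθD, ← X_mul_derivative_bernoulliSndWeighted]
    linear_combination X * this
  have hB : bernoulliSndSeries = D + bernoulliSndWeighted (fun x => x) := by
    ext n; simp [D]; ring
  have h0 : bernoulliSndWeighted (fun x => (x - 1) * (x - 2)) = 2 * D - θD := by
    ext n; simp [D, θD, ← map_ofNat C, coeff_C_mul]; ring
  have h1 : bernoulliSndWeighted (fun x => (x - 1) * (2 * x - 3)) = 3 * D - 2 * θD := by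
    ext n; simp [D, θD, ← map_ofNat C, coeff_C_mul]; ring
  have h2 : bernoulliSndWeighted (fun x => (x - 1) ^ 2) = D - θD := by
    ext n; simp [D, θD]; ring
  rw [h0, h1, h2]
  linear_combination (2 * bernoulliSndSeries + 2 * (1 + X)) * hsq - (1 + X) * hθ
    - 2 * (1 + X) * bernoulliSndSeries * hB

theorem sum_triple_mul_bernoulliSnd_general (n : ℕ) :
    ∑ j ∈ Finset.Nat.antidiagonalTuple 3 n,
        bernoulliSnd (j 0) * bernoulliSnd (j 1) * bernoulliSnd (j 2) =
      (1 / 2) * ((n : ℚ) - 1) * ((n : ℚ) - 2) * bernoulliSnd n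
        + (1 / 2) * ((n : ℚ) - 2) * (2 * (n : ℚ) - 5) * bernoulliSndInt ((n : ℤ) - 1)
        + (1 / 2) * ((n : ℚ) - 3) ^ 2 * bernoulliSndInt ((n : ℤ) - 2) := by
  have key := congrArg (coeff n) two_mul_bernoulliSndSeries_pow_three
  have hX := coeff_X_pow_mul_bernoulliSndWeighted (fun x => (x - 1) * (2 * x - 3)) 1 n
  rw [pow_one] at hX
  simp only [← map_ofNat C, coeff_C_mul, coeff_bernoulliSndSeries_pow_three, map_add,
    coeff_bernoulliSndWeighted, hX, coeff_X_pow_mul_bernoulliSndWeighted, Nat.cast_one,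
    Nat.cast_ofNat] at key
  linear_combination key / 2

theorem sum_triple_mul_bernoulliSnd (n : ℕ) (hn : 0 < n) :
    ∑ j ∈ Finset.Nat.antidiagonalTuple 3 n,
        bernoulliSnd (j 0) * bernoulliSnd (j 1) * bernoulliSnd (j 2) =
      (1 / 2) * ((n : ℚ) - 1) * ((n : ℚ) - 2) * bernoulliSnd n
        + (1 / 2) * ((n : ℚ) - 2) * (2 * (n : ℚ) - 5) * bernoulliSndInt ((n : ℤ) - 1)
        + (1 / 2) * ((n : ℚ) - 3) ^ 2 * bernoulliSndInt ((n : ℤ) - 2) :=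
  sum_triple_mul_bernoulliSnd_general n
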